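/- Let p be prime and n ≥ 1. The double coset K_0(p) w(p^n) K_0(p), where w(t) = [[0,-1],[t,0]], decomposes as the disjoint union over s ∈ Z_p/p^{n-1} Z_p of the left cosets y(ps) w(p^n) K_0(p), where y(t) = [[1,0],[t,1]]. -/

import Mathlib

/-!
Write `k = !![a, b; c, d] ∈ K₀(p)`. The diagonal entries of `k` are units, so
`c / (p a) ∈ ℤ_p` has a representative `s < p^{n-1}` modulo `p^{n-1}`, i.e. `c ≡ p s a (mod pⁿ)`;
this is exactly what makes `w(pⁿ)⁻¹ y(-p s) k w(pⁿ)` integral, so that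
`k w(pⁿ) ∈ y(p s) w(pⁿ) K₀(p)`. Conversely, if `y(u) w(t) k = y(u') w(t) k'` with `k, k' ∈ K₀(p)`,
the bottom row gives `(u - u') d = t (b - b')` with `d` a unit, so `‖u - u'‖ ≤ ‖t‖`; for
`u = p s`, `u' = p s'` and `t = pⁿ` this forces `s ≡ s' (mod p^{n-1})`.
-/

open Matrix

/-- The Iwahori subgroup `K₀(p)` of `GL₂(ℚ_p)`. -/
def IwahoriQ (p : ℕ) [Fact p.Prime] : Set (Matrix (Fin 2) (Fin 2) ℚ_[p]) :=
  {g | (∀ i j, ‖g i j‖ ≤ 1) ∧ ‖g.det‖ = 1 ∧ ‖g 1 0‖ ≤ (p : ℝ)⁻¹}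

/-- w(t) = [[0,-1],[t,0]] -/
noncomputable def wMatQ (p : ℕ) [Fact p.Prime] (t : ℚ_[p]) :
    Matrix (Fin 2) (Fin 2) ℚ_[p] := !![0, -1; t, 0]

/-- y(t) = [[1,0],[t,1]] -/
noncomputable def yMatQ (p : ℕ) [Fact p.Prime] (t : ℚ_[p]) :
    Matrix (Fin 2) (Fin 2) ℚ_[p] := !![1, 0; t, 1]

/-- The double coset `K g K`. -/
def dCosetQ (p : ℕ) [Fact p.Prime] (K : Set (Matrix (Fin 2) (Fin 2) ℚ_[p]))
    (g : Matrix (Fin 2) (Fin 2) ℚ_[p]) : Set (Matrix (Fin 2) (Fin 2) ℚ_[p]) :=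
  {m | ∃ k1 ∈ K, ∃ k2 ∈ K, m = k1 * g * k2}

/-- The left coset `g K`. -/
def lCosetQ (p : ℕ) [Fact p.Prime] (K : Set (Matrix (Fin 2) (Fin 2) ℚ_[p]))
    (g : Matrix (Fin 2) (Fin 2) ℚ_[p]) : Set (Matrix (Fin 2) (Fin 2) ℚ_[p]) :=
  {m | ∃ k ∈ K, m = g * k}

section

variable {p : ℕ} [Fact p.Prime]

namespace IwahoriQ

theorem mem_iff {g : Matrix (Fin 2) (Fin 2) ℚ_[p]} :
    g ∈ IwahoriQ p ↔ ‖g 0 0‖ ≤ 1 ∧ ‖g 0 1‖ ≤ 1 ∧ ‖g 1 0‖ ≤ (p : ℝ)⁻¹ ∧ ‖g 1 1‖ ≤ 1 ∧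
      ‖g 0 0 * g 1 1 - g 0 1 * g 1 0‖ = 1 := by
  have hp : (p : ℝ)⁻¹ ≤ 1 := Padic.norm_p (p := p) ▸ Padic.norm_p_lt_one.le
  simp only [IwahoriQ, Set.mem_ofPred_eq, Fin.forall_fin_two, det_fin_two]
  constructor
  · rintro ⟨⟨⟨h00, h01⟩, -, h11⟩, hdet, h10⟩
    exact ⟨h00, h01, h10, h11, hdet⟩
  · rintro ⟨h00, h01, h10, h11, hdet⟩
    exact ⟨⟨⟨h00, h01⟩, h10.trans hp, h11⟩, hdet, h10⟩

theorem mul_mem {g h : Matrix (Fin 2) (Fin 2) ℚ_[p]} (hg : g ∈ IwahoriQ p)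
    (hh : h ∈ IwahoriQ p) : g * h ∈ IwahoriQ p := by
  obtain ⟨hg1, hg2, hg3⟩ := hg
  obtain ⟨hh1, hh2, hh3⟩ := hh
  have hp : (p : ℝ)⁻¹ ≤ 1 := Padic.norm_p (p := p) ▸ Padic.norm_p_lt_one.le
  have hmul : ∀ i j, (g * h) i j = g i 0 * h 0 j + g i 1 * h 1 j := fun i j => by
    rw [mul_apply, Fin.sum_univ_two]
  refine ⟨fun i j => ?_, ?_, ?_⟩
  · rw [hmul]
    refine (IsUltrametricDist.norm_add_le_max _ _).trans (max_le ?_ ?_) <;>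
      rw [norm_mul] <;> exact mul_le_one₀ (hg1 _ _) (norm_nonneg _) (hh1 _ _)
  · rw [det_mul, norm_mul, hg2, hh2, one_mul]
  · rw [hmul]
    refine (IsUltrametricDist.norm_add_le_max _ _).trans (max_le ?_ ?_) <;> rw [norm_mul]
    · simpa using mul_le_mul hg3 (hh1 0 0) (norm_nonneg _) (by positivity)
    · simpa using mul_le_mul (hg1 1 1) hh3 (norm_nonneg _) zero_le_one

/-- Since `‖g 0 1 * g 1 0‖ < 1 = ‖det g‖`, the ultrametric inequality forces
`‖g 0 0 * g 1 1‖ = 1`. -/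
theorem norm_diag_eq_one {g : Matrix (Fin 2) (Fin 2) ℚ_[p]}
    (hg : g ∈ IwahoriQ p) : ‖g 0 0‖ = 1 ∧ ‖g 1 1‖ = 1 := by
  obtain ⟨h00, h01, h10, h11, hdet⟩ := mem_iff.mp hg
  have hoff : ‖g 0 1 * g 1 0‖ < 1 := by
    rw [norm_mul]
    calc ‖g 0 1‖ * ‖g 1 0‖ ≤ 1 * (p : ℝ)⁻¹ := mul_le_mul h01 h10 (norm_nonneg _) zero_le_one
      _ < 1 := by simpa [Padic.norm_p] using Padic.norm_p_lt_one (p := p)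
  have hdiag : ‖g 0 0 * g 1 1‖ = 1 := by
    rw [← sub_add_cancel (g 0 0 * g 1 1) (g 0 1 * g 1 0),
      IsUltrametricDist.norm_add_eq_max_of_norm_ne_norm (by rw [hdet]; exact hoff.ne'), hdet,
      max_eq_left hoff.le]
  rw [norm_mul] at hdiag
  constructor <;> nlinarith [norm_nonneg (g 0 0), norm_nonneg (g 1 1)]

end IwahoriQ

theorem yMatQ_mem_IwahoriQ {t : ℚ_[p]} (ht : ‖t‖ ≤ (p : ℝ)⁻¹) : yMatQ p t ∈ IwahoriQ p := by
  simp [IwahoriQ.mem_iff, yMatQ, ht]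

theorem mul_mem_lCosetQ {g m k : Matrix (Fin 2) (Fin 2) ℚ_[p]}
    (hm : m ∈ lCosetQ p (IwahoriQ p) g) (hk : k ∈ IwahoriQ p) :
    m * k ∈ lCosetQ p (IwahoriQ p) g := by
  obtain ⟨k', hk', rfl⟩ := hm
  exact ⟨k' * k, IwahoriQ.mul_mem hk' hk, mul_assoc _ _ _⟩

theorem yMatQ_mul_wMatQ (u t : ℚ_[p]) : yMatQ p u * wMatQ p t = !![0, -1; t, -u] := by
  simp [yMatQ, wMatQ]

theorem mul_wMatQ_mem_lCosetQ {k : Matrix (Fin 2) (Fin 2) ℚ_[p]} (hk : k ∈ IwahoriQ p)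
    {t u : ℚ_[p]} (ht0 : t ≠ 0) (ht : ‖t‖ ≤ (p : ℝ)⁻¹) (hu : ‖u‖ ≤ 1)
    (hku : ‖k 1 0 - u * k 0 0‖ ≤ ‖t‖) :
    k * wMatQ p t ∈ lCosetQ p (IwahoriQ p) (yMatQ p u * wMatQ p t) := by
  obtain ⟨a, b, c, d, rfl⟩ : ∃ a b c d, k = !![a, b; c, d] := ⟨_, _, _, _, eta_fin_two k⟩
  obtain ⟨ha, hb, -, hd, hdet⟩ := IwahoriQ.mem_iff.mp hk
  simp only [of_apply, cons_val', cons_val_zero, cons_val_one, empty_val', cons_val_fin_one]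
    at ha hb hd hdet hku
  -- the witness is `w(t)⁻¹ y(-u) k w(t)`
  refine ⟨!![d - u * b, -(c - u * a) / t; -(t * b), a], IwahoriQ.mem_iff.mpr ?_, ?_⟩
  · simp only [of_apply, cons_val', cons_val_zero, cons_val_one, empty_val', cons_val_fin_one]
    refine ⟨?_, ?_, ?_, ha, ?_⟩
    · rw [sub_eq_add_neg]
      refine (IsUltrametricDist.norm_add_le_max _ _).trans (max_le hd ?_)
      rw [norm_neg, norm_mul]
      exact mul_le_one₀ hu (norm_nonneg _) hb
    · rw [norm_div, norm_neg, div_le_one (norm_pos_iff.mpr ht0)]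
      exact hku
    · rw [norm_neg, norm_mul]
      simpa using mul_le_mul ht hb (norm_nonneg _) (by positivity)
    · convert hdet using 2
      field_simp
      ring
  · rw [yMatQ_mul_wMatQ]
    ext i j
    fin_cases i <;> fin_cases j <;>
      simp [wMatQ, mul_apply, Fin.sum_univ_two] <;> field_simp <;> ring

theorem norm_sub_le_of_mem_lCosetQ {x : Matrix (Fin 2) (Fin 2) ℚ_[p]} {t u u' : ℚ_[p]}
    (hx : x ∈ lCosetQ p (IwahoriQ p) (yMatQ p u * wMatQ p t))
    (hx' : x ∈ lCosetQ p (IwahoriQ p) (yMatQ p u' * wMatQ p t)) : ‖u - u'‖ ≤ ‖t‖ := by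
  obtain ⟨k, hk, rfl⟩ := hx
  obtain ⟨k', hk', hkk'⟩ := hx'
  have h01 := congrFun₂ hkk' 0 1
  have h11 := congrFun₂ hkk' 1 1
  simp only [yMatQ_mul_wMatQ, mul_apply, of_apply, cons_val', cons_val_fin_one, cons_val_zero,
    Fin.sum_univ_two, zero_mul, cons_val_one, neg_mul, one_mul, zero_add, neg_inj] at h01 h11
  have key : (u - u') * k 1 1 = t * (k 0 1 - k' 0 1) := by linear_combination -h11 - u' * h01
  have hb : ‖k 0 1 - k' 0 1‖ ≤ 1 := by
    rw [sub_eq_add_neg]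
    exact (IsUltrametricDist.norm_add_le_max _ _).trans
      (max_le (hk.1 0 1) ((norm_neg _).trans_le (hk'.1 0 1)))
  have hnorm := congrArg norm key
  rw [norm_mul, norm_mul, (IwahoriQ.norm_diag_eq_one hk).2, mul_one] at hnorm
  rw [hnorm]
  exact mul_le_of_le_one_right (norm_nonneg _) hb

theorem exists_lt_pow_norm_sub_natCast_le {x : ℚ_[p]} (hx : ‖x‖ ≤ 1) (m : ℕ) :
    ∃ s < p ^ m, ‖x - s‖ ≤ (p : ℝ) ^ (-m : ℤ) := by
  set y : ℤ_[p] := ⟨x, hx⟩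
  refine ⟨y.appr m, y.appr_lt m, ?_⟩
  have := (PadicInt.norm_le_pow_iff_mem_span_pow _ m).mpr (y.appr_spec m)
  exact_mod_cast this

theorem eq_of_norm_natCast_sub_le {s t m : ℕ} (hs : s < p ^ m) (ht : t < p ^ m)
    (hst : ‖(s : ℚ_[p]) - t‖ ≤ (p : ℝ) ^ (-m : ℤ)) : s = t := by
  have hdvd : ((p ^ m : ℕ) : ℤ) ∣ (s : ℤ) - t := by
    rw [Nat.cast_pow, ← Padic.norm_int_le_pow_iff_dvd]
    exact_mod_cast hst
  have := Int.eq_zero_of_abs_lt_dvd hdvd (by rw [abs_lt]; omega)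
  omega

theorem norm_natCast_pow_succ_le (m : ℕ) : ‖(p : ℚ_[p]) ^ (m + 1)‖ ≤ (p : ℝ)⁻¹ := by
  rw [norm_pow, Padic.norm_p]
  exact pow_le_of_le_one (by positivity) (Padic.norm_p (p := p) ▸ Padic.norm_p_lt_one.le)
    m.succ_ne_zero

theorem norm_natCast_mul_natCast_le (s : ℕ) : ‖(p : ℚ_[p]) * s‖ ≤ (p : ℝ)⁻¹ := by
  rw [norm_mul, Padic.norm_p]
  exact mul_le_of_le_one_right (by positivity) (by exact_mod_cast Padic.norm_int_le_one (s : ℤ))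

theorem exists_mul_wMatQ_mem_lCosetQ {k : Matrix (Fin 2) (Fin 2) ℚ_[p]} (hk : k ∈ IwahoriQ p)
    (m : ℕ) : ∃ s < p ^ m, k * wMatQ p ((p : ℚ_[p]) ^ (m + 1)) ∈
      lCosetQ p (IwahoriQ p) (yMatQ p ((p : ℚ_[p]) * s) * wMatQ p ((p : ℚ_[p]) ^ (m + 1))) := by
  have hp : (p : ℚ_[p]) ≠ 0 := Nat.cast_ne_zero.mpr (Fact.out : p.Prime).ne_zero
  have hp0 : (0 : ℝ) < p := Nat.cast_pos.mpr (Fact.out : p.Prime).pos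
  have ha := (IwahoriQ.norm_diag_eq_one hk).1
  have ha0 : k 0 0 ≠ 0 := norm_ne_zero_iff.mp (ha.trans_ne one_ne_zero)
  have hx : ‖k 1 0 / (p * k 0 0)‖ ≤ 1 := by
    rw [norm_div, norm_mul, ha, mul_one, Padic.norm_p, div_le_one (by positivity)]
    exact (IwahoriQ.mem_iff.mp hk).2.2.1
  obtain ⟨s, hs, hxs⟩ := exists_lt_pow_norm_sub_natCast_le hx m
  refine ⟨s, hs, mul_wMatQ_mem_lCosetQ hk (pow_ne_zero _ hp) (norm_natCast_pow_succ_le m)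
    ((norm_natCast_mul_natCast_le s).trans (Padic.norm_p (p := p) ▸ Padic.norm_p_lt_one.le)) ?_⟩
  have hfactor : k 1 0 - p * s * k 0 0 = (p * k 0 0) * (k 1 0 / (p * k 0 0) - s) := by
    field_simp
  rw [hfactor, pow_succ', norm_mul, norm_mul, norm_mul, ha, mul_one, Padic.norm_p_pow]
  gcongr

theorem eq_of_mem_lCosetQ_inter {s t m : ℕ} (hs : s < p ^ m) (ht : t < p ^ m)
    {x : Matrix (Fin 2) (Fin 2) ℚ_[p]}
    (hxs : x ∈ lCosetQ p (IwahoriQ p)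
      (yMatQ p ((p : ℚ_[p]) * s) * wMatQ p ((p : ℚ_[p]) ^ (m + 1))))
    (hxt : x ∈ lCosetQ p (IwahoriQ p)
      (yMatQ p ((p : ℚ_[p]) * t) * wMatQ p ((p : ℚ_[p]) ^ (m + 1)))) :
    s = t := by
  have hp : 0 < ‖(p : ℚ_[p])‖ :=
    norm_pos_iff.mpr (Nat.cast_ne_zero.mpr (Fact.out : p.Prime).ne_zero)
  have h := norm_sub_le_of_mem_lCosetQ hxs hxt
  rw [← mul_sub, pow_succ', norm_mul, norm_mul, mul_le_mul_iff_right₀ hp, Padic.norm_p_pow] at h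
  exact eq_of_norm_natCast_sub_le hs ht h

end

/-- `K₀(p) w(pⁿ) K₀(p)` (n ≥ 1) is the disjoint union over `s ∈ ℤ_p/p^{n-1}ℤ_p`
of the left cosets `y(ps) w(pⁿ) K₀(p)`. -/
theorem stmt2 (p : ℕ) [Fact p.Prime] (n : ℕ) (hn : 1 ≤ n) :
    (dCosetQ p (IwahoriQ p) (wMatQ p ((p : ℚ_[p]) ^ n)) =
      ⋃ s ∈ Finset.range (p ^ (n - 1)),
        lCosetQ p (IwahoriQ p) (yMatQ p ((p : ℚ_[p]) * (s : ℚ_[p])) * wMatQ p ((p : ℚ_[p]) ^ n))) ∧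
    (∀ s ∈ Finset.range (p ^ (n - 1)), ∀ t ∈ Finset.range (p ^ (n - 1)), s ≠ t →
      Disjoint
        (lCosetQ p (IwahoriQ p) (yMatQ p ((p : ℚ_[p]) * (s : ℚ_[p])) * wMatQ p ((p : ℚ_[p]) ^ n)))
        (lCosetQ p (IwahoriQ p) (yMatQ p ((p : ℚ_[p]) * (t : ℚ_[p])) * wMatQ p ((p : ℚ_[p]) ^ n)))) := by
  obtain ⟨m, rfl⟩ : ∃ m, n = m + 1 := ⟨n - 1, by omega⟩
  simp only [Nat.add_sub_cancel]
  refine ⟨Set.Subset.antisymm ?_ ?_, fun s hs t ht hst => Set.disjoint_left.mpr fun x hxs hxt =>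
    hst (eq_of_mem_lCosetQ_inter (Finset.mem_range.mp hs) (Finset.mem_range.mp ht) hxs hxt)⟩
  · rintro _ ⟨k₁, hk₁, k₂, hk₂, rfl⟩
    obtain ⟨s, hs, hk₁s⟩ := exists_mul_wMatQ_mem_lCosetQ hk₁ m
    exact Set.mem_iUnion₂.mpr ⟨s, Finset.mem_range.mpr hs, mul_mem_lCosetQ hk₁s hk₂⟩
  · simp only [Set.iUnion_subset_iff]
    rintro s - _ ⟨k, hk, rfl⟩
    exact ⟨_, yMatQ_mem_IwahoriQ (norm_natCast_mul_natCast_le s), k, hk, rfl⟩
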